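/- Let μ be the Lie bracket on ℝ^7 with nonzero basis brackets [e1,e2]=e3, [e1,e3]=e4, [e1,e4]=e5, [e1,e6]=e7, [e2,e3]=e6, [e2,e4]=e7, [e2,e5]=e7, [e3,e4]=-e7. Then φ = (2/3)·diag(0,1,1,1,1,2,2) is a derivation of (ℝ^7,μ) and φ is pre-Einstein, i.e. trace(φ∘ψ) = trace(ψ) for every derivation ψ of (ℝ^7,μ). -/

import Mathlib

/-!
Indices below are 1-based as in the informal statement; the code's `Fin 7` indices are one less.

The bracket is graded by the weights `w = (0,1,1,1,1,2,2)`: `[e_i, e_j]` has a component along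
`e_k` only if `w_k = w_i + w_j`, so `diag w` is a derivation. Conversely, reading the derivation
identity of an arbitrary derivation `ψ` off a few basis brackets forces the diagonal of `ψ` to be
`t • w` for some `t`. The only off-diagonal entry that enters, the `e₄`-component of `ψ e₅`
(from `[e₂, e₅] = e₇`), is carried by `ad e₁` to the `e₂`-component of `ψ e₃`, which vanishes
because `e₂` is not a bracket. Hence `trace (φ ∘ ψ) = (2/3) t ∑ w_i² = 8 t = t ∑ w_i = trace ψ`.
Skew-symmetry, the Jacobi identity and the grading are finite checks on the integer structure
constants.
-/

open Finset

noncomputable section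

/-- `ℝ⁷` with its standard basis and standard inner product. -/
abbrev V7 : Type := Fin 7 → ℝ

/-- The standard basis vector `e i`. -/
def e (i : Fin 7) : V7 := Pi.single i 1

/-- The standard inner product on `ℝ⁷`. -/
def dot (x y : V7) : ℝ := ∑ i, x i * y i

/-- Structure constants built from a list of entries `(i, j, k, a)`, each meaning that
`μ (e i) (e j)` has component `a` along `e k` (and `μ (e j) (e i)` has component `-a`);
all unlisted basis brackets are `0`. -/
def toC (L : List (Fin 7 × Fin 7 × Fin 7 × ℝ)) (i j k : Fin 7) : ℝ :=
  (L.map fun t =>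
      (if t.1 = i ∧ t.2.1 = j ∧ t.2.2.1 = k then t.2.2.2 else 0)
    - (if t.1 = j ∧ t.2.1 = i ∧ t.2.2.1 = k then t.2.2.2 else 0)).sum

/-- The bilinear skew-symmetric map on `ℝ⁷` with structure constants `c`. -/
def br (c : Fin 7 → Fin 7 → Fin 7 → ℝ) (x y : V7) : V7 :=
  fun k => ∑ i, ∑ j, x i * y j * c i j k

lemma br_add_left (c : Fin 7 → Fin 7 → Fin 7 → ℝ) (x x' y : V7) :
    br c (x + x') y = br c x y + br c x' y := by
  funext k
  simp only [br, Pi.add_apply, ← Finset.sum_add_distrib]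
  exact Finset.sum_congr rfl fun i _ => Finset.sum_congr rfl fun j _ => by ring

lemma br_smul_left (c : Fin 7 → Fin 7 → Fin 7 → ℝ) (r : ℝ) (x y : V7) :
    br c (r • x) y = r • br c x y := by
  funext k
  simp only [br, Pi.smul_apply, smul_eq_mul, Finset.mul_sum]
  exact Finset.sum_congr rfl fun i _ => Finset.sum_congr rfl fun j _ => by ring

lemma br_add_right (c : Fin 7 → Fin 7 → Fin 7 → ℝ) (x y y' : V7) :
    br c x (y + y') = br c x y + br c x y' := by
  funext k
  simp only [br, Pi.add_apply, ← Finset.sum_add_distrib]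
  exact Finset.sum_congr rfl fun i _ => Finset.sum_congr rfl fun j _ => by ring

lemma br_smul_right (c : Fin 7 → Fin 7 → Fin 7 → ℝ) (r : ℝ) (x y : V7) :
    br c x (r • y) = r • br c x y := by
  funext k
  simp only [br, Pi.smul_apply, smul_eq_mul, Finset.mul_sum]
  exact Finset.sum_congr rfl fun i _ => Finset.sum_congr rfl fun j _ => by ring

lemma br_zero_left (c : Fin 7 → Fin 7 → Fin 7 → ℝ) (y : V7) : br c 0 y = 0 := by
  funext k; simp [br]

lemma br_zero_right (c : Fin 7 → Fin 7 → Fin 7 → ℝ) (x : V7) : br c x 0 = 0 := by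
  funext k; simp [br]

/-- The space of derivations of the algebra `(ℝ⁷, br c)`, i.e. the linear maps `D` with
`D (μ x y) = μ (D x) y + μ x (D y)` for all `x, y`, as a submodule of the endomorphisms. -/
def derivations (c : Fin 7 → Fin 7 → Fin 7 → ℝ) : Submodule ℝ (Module.End ℝ V7) where
  carrier := {D | ∀ x y, D (br c x y) = br c (D x) y + br c x (D y)}
  add_mem' := by
    intro D E hD hE x y
    simp only [LinearMap.add_apply, hD x y, hE x y, br_add_left, br_add_right]
    abel
  zero_mem' := by
    intro x y
    simp [br_zero_left, br_zero_right]
  smul_mem' := by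
    intro r D hD x y
    simp only [LinearMap.smul_apply, hD x y, smul_add, br_smul_left, br_smul_right]

/-- The Jacobi identity for the bracket `br c`. -/
def Jacobi (c : Fin 7 → Fin 7 → Fin 7 → ℝ) : Prop :=
  ∀ x y z : V7, br c (br c x y) z + br c (br c y z) x + br c (br c z x) y = 0

/-- Skew-symmetry of the bracket `br c`. -/
def Skew (c : Fin 7 → Fin 7 → Fin 7 → ℝ) : Prop :=
  ∀ x y : V7, br c x y = - br c y x

/-- The diagonal endomorphism `diag (a 1, …, a 7)` of `ℝ⁷`, `e i ↦ a i • e i`. -/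
def diagL (a : Fin 7 → ℝ) : Module.End ℝ V7 :=
  LinearMap.pi fun i => a i • LinearMap.proj i

/-- Structure constants of the bracket with nonzero basis brackets
`[e1,e2]=e3, [e1,e3]=e4, [e1,e4]=e5, [e1,e6]=e7, [e2,e3]=e6, [e2,e4]=e7, [e2,e5]=e7,
[e3,e4]=-e7`. -/
def c5 : Fin 7 → Fin 7 → Fin 7 → ℝ :=
  toC [(0, 1, 2, (1:ℝ)),
   (0, 2, 3, 1),
   (0, 3, 4, 1),
   (0, 5, 6, 1),
   (1, 2, 5, 1),
   (1, 3, 6, 1),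
   (1, 4, 6, 1),
   (2, 3, 6, -1)]

/-- `toC` over an arbitrary ring, so that the structure constants can be computed in `ℤ`. -/
def structConsts {R : Type*} [Ring R] (L : List (Fin 7 × Fin 7 × Fin 7 × R)) (i j k : Fin 7) : R :=
  (L.map fun t =>
      (if t.1 = i ∧ t.2.1 = j ∧ t.2.2.1 = k then t.2.2.2 else 0)
    - (if t.1 = j ∧ t.2.1 = i ∧ t.2.2.1 = k then t.2.2.2 else 0)).sum

lemma toC_eq_structConsts : toC = structConsts := rfl

lemma structConsts_map {R S : Type*} [Ring R] [Ring S] (f : R →+* S)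
    (L : List (Fin 7 × Fin 7 × Fin 7 × R)) (i j k : Fin 7) :
    structConsts (L.map fun t => (t.1, t.2.1, t.2.2.1, f t.2.2.2)) i j k
      = f (structConsts L i j k) := by
  induction L with
  | nil => simp [structConsts]
  | cons t L ih =>
    simp only [structConsts, List.map_cons, List.sum_cons] at ih ⊢
    rw [ih, map_add, map_sub, apply_ite f, apply_ite f, map_zero]

lemma structConsts_swap {R : Type*} [Ring R] (L : List (Fin 7 × Fin 7 × Fin 7 × R))
    (i j k : Fin 7) : structConsts L j i k = - structConsts L i j k := by
  induction L with
  | nil => simp [structConsts]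
  | cons t L ih =>
    simp only [structConsts, List.map_cons, List.sum_cons] at ih ⊢
    rw [ih]; abel

section StructureConstants

variable (c : Fin 7 → Fin 7 → Fin 7 → ℝ)

lemma skew_of_swap (h : ∀ i j k, c j i k = - c i j k) : Skew c := by
  intro x y
  funext k
  simp only [br, Pi.neg_apply, ← sum_neg_distrib]
  rw [sum_comm]
  refine sum_congr rfl fun i _ => sum_congr rfl fun j _ => ?_
  rw [h]
  ring

lemma br_br_apply (x y z : V7) (k : Fin 7) :
    br c (br c x y) z k = ∑ i, ∑ j, ∑ l, x i * y j * z l * ∑ m, c i j m * c m l k := by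
  simp only [br, sum_mul, mul_sum]
  rw [sum_congr rfl fun m _ => sum_comm_cycle.symm, sum_comm_cycle.symm]
  refine sum_congr rfl fun i _ => sum_congr rfl fun j _ => ?_
  rw [sum_comm]
  exact sum_congr rfl fun l _ => sum_congr rfl fun m _ => by ring

lemma jacobi_of_structConsts
    (h : ∀ i j l k, ∑ m, (c i j m * c m l k + c j l m * c m i k + c l i m * c m j k) = 0) :
    Jacobi c := by
  intro x y z
  funext k
  simp only [Pi.add_apply, Pi.zero_apply, br_br_apply]
  rw [sum_comm_cycle (f := fun i j l => y i * z j * x l * ∑ m, c i j m * c m l k),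
    sum_comm_cycle (f := fun i j l => z i * x j * y l * ∑ m, c i j m * c m l k),
    sum_comm_cycle (f := fun l i j => z i * x j * y l * ∑ m, c i j m * c m l k)]
  simp only [← sum_add_distrib]
  refine sum_eq_zero fun i _ => sum_eq_zero fun j _ =>
    sum_eq_zero fun l _ => ?_
  simp only [sum_add_distrib] at h
  linear_combination (x i * y j * z l) * h i j l k

lemma diagL_apply (a : Fin 7 → ℝ) (x : V7) (i : Fin 7) : diagL a x i = a i * x i := by
  simp [diagL]

lemma diagL_mem_derivations (a : Fin 7 → ℝ) (h : ∀ i j k, c i j k ≠ 0 → a k = a i + a j) :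
    diagL a ∈ derivations c := by
  intro x y
  funext k
  simp only [diagL_apply, Pi.add_apply, br, mul_sum, ← sum_add_distrib]
  refine sum_congr rfl fun i _ => sum_congr rfl fun j _ => ?_
  by_cases hc : c i j k = 0
  · simp [hc]
  · rw [h i j k hc]; ring

lemma br_single_single (i j : Fin 7) : br c (e i) (e j) = ∑ k, c i j k • e k := by
  funext l
  simp [br, e, Pi.single_apply]

lemma mem_derivations_apply_single {D : Module.End ℝ V7} (hD : D ∈ derivations c)
    (i j l : Fin 7) :
    ∑ k, c i j k * D (e k) l = ∑ a, c a j l * D (e i) a + ∑ a, c i a l * D (e j) a := by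
  have h := congrFun (hD (e i) (e j)) l
  simp only [br_single_single, map_sum, map_smul] at h
  simpa [br, e, Pi.single_apply, mul_comm] using h

lemma trace_eq_sum_apply_single (D : Module.End ℝ V7) :
    LinearMap.trace ℝ V7 D = ∑ i, D (e i) i := by
  rw [LinearMap.trace_eq_matrix_trace ℝ (Pi.basisFun ℝ (Fin 7)), Matrix.trace]
  simp [e]

end StructureConstants

def c5Int : Fin 7 → Fin 7 → Fin 7 → ℤ :=
  structConsts [(0, 1, 2, 1), (0, 2, 3, 1), (0, 3, 4, 1), (0, 5, 6, 1),
    (1, 2, 5, 1), (1, 3, 6, 1), (1, 4, 6, 1), (2, 3, 6, -1)]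

lemma c5_eq_intCast (i j k : Fin 7) : c5 i j k = c5Int i j k := by
  rw [c5Int, ← eq_intCast (Int.castRingHom ℝ), ← structConsts_map, c5, toC_eq_structConsts]
  norm_num

lemma skew_c5 : Skew c5 :=
  skew_of_swap c5 fun i j k => by rw [c5, toC_eq_structConsts, structConsts_swap]

set_option maxRecDepth 100000 in
lemma c5Int_jacobi_identity (i j l k : Fin 7) :
    ∑ m, (c5Int i j m * c5Int m l k + c5Int j l m * c5Int m i k + c5Int l i m * c5Int m j k)
      = 0 := by
  revert i j l k
  decide

lemma jacobi_c5 : Jacobi c5 :=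
  jacobi_of_structConsts c5 fun i j l k => by
    simp only [c5_eq_intCast]
    exact_mod_cast c5Int_jacobi_identity i j l k

def c5Weights : Fin 7 → ℤ := ![0, 1, 1, 1, 1, 2, 2]

set_option maxRecDepth 10000 in
lemma c5Weights_add_of_c5Int_ne_zero (i j k : Fin 7) (h : c5Int i j k ≠ 0) :
    c5Weights k = c5Weights i + c5Weights j := by
  revert i j k
  decide

lemma c5Weights_intCast : (fun i => (c5Weights i : ℝ)) = ![0, 1, 1, 1, 1, 2, 2] := by
  ext i
  fin_cases i <;> simp [c5Weights]

lemma diagL_weights_mem_derivations_c5 : diagL ![0, 1, 1, 1, 1, 2, 2] ∈ derivations c5 := by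
  refine c5Weights_intCast ▸ diagL_mem_derivations c5 _ fun i j k h => ?_
  rw [c5_eq_intCast, Int.cast_ne_zero] at h
  exact_mod_cast c5Weights_add_of_c5Int_ne_zero i j k h

lemma exists_apply_single_self_eq_mul_of_mem_derivations_c5 {ψ : Module.End ℝ V7}
    (hψ : ψ ∈ derivations c5) : ∃ t, ∀ i, ψ (e i) i = c5Weights i * t := by
  have key := mem_derivations_apply_single c5 hψ
  have h011 : ψ (e 2) 1 = 0 := by
    simpa +decide [Fin.sum_univ_seven, c5_eq_intCast, c5Int, structConsts] using key 0 1 1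
  have h022 : ψ (e 3) 2 = ψ (e 2) 1 := by
    simpa +decide [Fin.sum_univ_seven, c5_eq_intCast, c5Int, structConsts] using key 0 2 2
  have h033 : ψ (e 4) 3 = ψ (e 3) 2 := by
    simpa +decide [Fin.sum_univ_seven, c5_eq_intCast, c5Int, structConsts] using key 0 3 3
  have h012 : ψ (e 2) 2 = ψ (e 0) 0 + ψ (e 1) 1 := by
    simpa +decide [Fin.sum_univ_seven, c5_eq_intCast, c5Int, structConsts] using key 0 1 2
  have h023 : ψ (e 3) 3 = ψ (e 0) 0 + ψ (e 2) 2 := by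
    simpa +decide [Fin.sum_univ_seven, c5_eq_intCast, c5Int, structConsts] using key 0 2 3
  have h034 : ψ (e 4) 4 = ψ (e 0) 0 + ψ (e 3) 3 := by
    simpa +decide [Fin.sum_univ_seven, c5_eq_intCast, c5Int, structConsts] using key 0 3 4
  have h056 : ψ (e 6) 6 = ψ (e 0) 0 + ψ (e 5) 5 := by
    simpa +decide [Fin.sum_univ_seven, c5_eq_intCast, c5Int, structConsts] using key 0 5 6
  have h125 : ψ (e 5) 5 = ψ (e 1) 1 + ψ (e 2) 2 := by
    simpa +decide [Fin.sum_univ_seven, c5_eq_intCast, c5Int, structConsts] using key 1 2 5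
  have h146 : ψ (e 6) 6 = ψ (e 1) 1 + (ψ (e 4) 3 + ψ (e 4) 4) := by
    simpa +decide [Fin.sum_univ_seven, c5_eq_intCast, c5Int, structConsts] using key 1 4 6
  have h0 : ψ (e 0) 0 = 0 := by linarith
  refine ⟨ψ (e 1) 1, fun i => ?_⟩
  fin_cases i <;>
    simp only [c5Weights, Fin.zero_eta, Fin.mk_one, Fin.reduceFinMk, Matrix.cons_val_zero,
      Matrix.cons_val_one, Matrix.cons_val, Int.cast_zero, Int.cast_one, Int.cast_ofNat] <;>
    linarith

/-- The bracket satisfies the Jacobi identity (and is skew-symmetric), `φ` is a derivation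
of it, and `φ` is pre-Einstein: `trace (φ ∘ ψ) = trace ψ` for every derivation `ψ`. -/
theorem stmt :
    Skew c5 ∧ Jacobi c5 ∧
    ((2/3 : ℝ) • diagL ![0, 1, 1, 1, 1, 2, 2]) ∈ derivations c5 ∧
    ∀ ψ ∈ derivations c5,
      LinearMap.trace ℝ V7 (((2/3 : ℝ) • diagL ![0, 1, 1, 1, 1, 2, 2]) ∘ₗ ψ) = LinearMap.trace ℝ V7 ψ := by
  refine ⟨skew_c5, jacobi_c5, Submodule.smul_mem _ _ diagL_weights_mem_derivations_c5,
    fun ψ hψ => ?_⟩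
  obtain ⟨t, ht⟩ := exists_apply_single_self_eq_mul_of_mem_derivations_c5 hψ
  simp only [trace_eq_sum_apply_single, LinearMap.comp_apply, LinearMap.smul_apply, Pi.smul_apply,
    smul_eq_mul, diagL_apply, ht, c5Weights, Fin.sum_univ_succ, Fin.sum_univ_zero,
    Matrix.cons_val_zero, Matrix.cons_val_succ, Int.cast_zero, Int.cast_one, Int.cast_ofNat]
  ring
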